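/- Let n ≥ 2 be a positive integer and R = F_1 × ⋯ × F_n, where each F_i is a field. Then the strong metric dimension of G(R) equals 2^n − 2^{n-1} − 1; that is, the minimum cardinality of a strong resolving set of G(R) is 2^n − 2^{n-1} − 1. -/

import Mathlib

open SimpleGraph

/-- The type of non-trivial ideals of a commutative ring `R`
(ideals `I` with `I ≠ 0` and `I ≠ R`). -/
abbrev NontrivialIdeal (R : Type*) [CommRing R] : Type _ :=
  {I : Ideal R // I ≠ ⊥ ∧ I ≠ ⊤}

/-- The intersection graph of ideals of `R`: vertices are the non-trivial ideals,
and distinct vertices are adjacent iff their intersection is non-zero. -/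
def intersectionGraph (R : Type*) [CommRing R] : SimpleGraph (NontrivialIdeal R) where
  Adj I J := I ≠ J ∧ I.1 ⊓ J.1 ≠ ⊥
  symm := ⟨fun I J h => ⟨h.1.symm, by rw [inf_comm]; exact h.2⟩⟩
  loopless := ⟨fun I h => h.1 rfl⟩

/-- Two distinct vertices `u, v` are mutually maximally distant if
`d(v,w) ≤ d(u,v)` for every neighbour `w` of `u` and
`d(u,w) ≤ d(u,v)` for every neighbour `w` of `v`. -/
def MutuallyMaximallyDistant {V : Type*} (G : SimpleGraph V) (u v : V) : Prop :=
  u ≠ v ∧ (∀ w, G.Adj u w → G.edist v w ≤ G.edist u v) ∧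
    (∀ w, G.Adj v w → G.edist u w ≤ G.edist u v)

theorem MutuallyMaximallyDistant.symm {V : Type*} {G : SimpleGraph V} {u v : V}
    (h : MutuallyMaximallyDistant G u v) : MutuallyMaximallyDistant G v u :=
  ⟨h.1.symm,
    fun w hw => by rw [show G.edist v u = G.edist u v from G.edist_comm]; exact h.2.2 w hw,
    fun w hw => by rw [show G.edist v u = G.edist u v from G.edist_comm]; exact h.2.1 w hw⟩

/-- The strong resolving graph of `G`: `u` and `v` are adjacent iff they are
mutually maximally distant. -/
def strongResolvingGraph {V : Type*} (G : SimpleGraph V) : SimpleGraph V where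
  Adj := MutuallyMaximallyDistant G
  symm := ⟨fun _ _ h => h.symm⟩
  loopless := ⟨fun _ h => h.1 rfl⟩

/-- A vertex `w` strongly resolves `u` and `v` if `d(w,u) = d(w,v) + d(v,u)` or
`d(w,v) = d(w,u) + d(u,v)`. A set `W` is a strong resolving set if every two distinct
vertices are strongly resolved by some member of `W`. -/
def IsStrongResolvingSet {V : Type*} (G : SimpleGraph V) (W : Set V) : Prop :=
  ∀ u v : V, u ≠ v → ∃ w ∈ W,
    G.edist w u = G.edist w v + G.edist v u ∨ G.edist w v = G.edist w u + G.edist u v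

/-- The product ideal which is `Rᵢ` in the components where `I` is zero and `0` elsewhere. -/
def complIdeal {ι : Type*} (F : ι → Type*) [∀ i, CommRing (F i)] (I : Ideal (∀ i, F i)) :
    Ideal (∀ i, F i) where
  carrier := {x | ∀ i, I.map (Pi.evalRingHom F i) ≠ ⊥ → x i = 0}
  zero_mem' := fun i _ => rfl
  add_mem' := fun hx hy i hi => by
    simp only [Pi.add_apply, hx i hi, hy i hi, add_zero]
  smul_mem' := fun c x hx i hi => by
    simp only [Pi.smul_apply, smul_eq_mul, Pi.mul_apply, hx i hi, mul_zero]

/-!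
The nontrivial ideals of `∏ Fᵢ` are the products `∏_{i ∈ S} Fᵢ` over nonempty proper index
sets `S`, and two of them meet exactly when their index sets do. So `G(R)` is the graph on
nonempty proper subsets of `{1, …, n}` in which distinct sets are adjacent when they intersect.

Once there are three vertices (`n ≥ 3`), this graph has diameter at most `2`, so no third vertex
`w` strongly resolves two disjoint sets `u, v`: that would force `d(w,u) ≥ d(w,v) + 2 ≥ 3`.
Hence the vertices outside a strong resolving set form an intersecting family, which stays
intersecting when the full set is added; so there are at most `2^(n-1) - 1` of them. Conversely
the sets avoiding a fixed index `a` form a strong resolving set of that size: if `u` and `v` both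
contain `a` and `v ⊄ u`, then `w = v \ u` satisfies `d(w,u) = 2 = d(w,v) + d(v,u)`.
-/

section GraphMetric

variable {V V' : Type*} {G : SimpleGraph V} {G' : SimpleGraph V'}

theorem SimpleGraph.Hom.edist_map_le (f : G →g G') (u v : V) :
    G'.edist (f u) (f v) ≤ G.edist u v := by
  by_cases h : G.Reachable u v
  · obtain ⟨p, hp⟩ := h.exists_walk_length_eq_edist
    rw [← hp, ← p.length_map f]
    exact (p.map f).edist_le
  · rw [edist_eq_top_of_not_reachable h]
    exact le_top

theorem SimpleGraph.Iso.edist_map (e : G ≃g G') (u v : V) :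
    G'.edist (e u) (e v) = G.edist u v :=
  le_antisymm (e.toHom.edist_map_le u v) <| by
    simpa using e.symm.toHom.edist_map_le (e u) (e v)

variable (G) in
def StronglyResolves (w u v : V) : Prop :=
  G.edist w u = G.edist w v + G.edist v u ∨ G.edist w v = G.edist w u + G.edist u v

theorem StronglyResolves.symm {w u v : V} (h : StronglyResolves G w u v) :
    StronglyResolves G w v u :=
  Or.symm h

theorem stronglyResolves_self_left (u v : V) : StronglyResolves G u u v :=
  .inr (by rw [edist_self, zero_add])

theorem IsStrongResolvingSet.image {W : Set V} (hW : IsStrongResolvingSet G W)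
    (e : G ≃g G') :
    IsStrongResolvingSet G' (e '' W) := by
  intro u v huv
  obtain ⟨w, hw, hres⟩ := hW (e.symm u) (e.symm v) (e.symm.injective.ne huv)
  refine ⟨e w, Set.mem_image_of_mem e hw, ?_⟩
  simpa [StronglyResolves, ← e.edist_map] using hres

theorem SimpleGraph.Iso.strongResolvingSet_ncards_subset (e : G ≃g G') :
    {k | ∃ W, W.Finite ∧ IsStrongResolvingSet G W ∧ W.ncard = k} ⊆
      {k | ∃ W, W.Finite ∧ IsStrongResolvingSet G' W ∧ W.ncard = k} := by
  rintro _ ⟨W, hfin, hW, rfl⟩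
  exact ⟨e '' W, hfin.image e, hW.image e, Set.ncard_image_of_injective W e.injective⟩

theorem SimpleGraph.Iso.strongResolvingSet_ncards_eq (e : G ≃g G') :
    {k | ∃ W, W.Finite ∧ IsStrongResolvingSet G W ∧ W.ncard = k} =
      {k | ∃ W, W.Finite ∧ IsStrongResolvingSet G' W ∧ W.ncard = k} :=
  e.strongResolvingSet_ncards_subset.antisymm e.symm.strongResolvingSet_ncards_subset

theorem not_stronglyResolves_of_edist_le_two {w u v : V} (hw : ∀ x, G.edist w x ≤ 2)
    (hwu : w ≠ u) (hwv : w ≠ v) (huv : 2 ≤ G.edist u v) : ¬StronglyResolves G w u v := by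
  have key : ∀ {a b}, w ≠ a → 2 ≤ G.edist a b → G.edist w b ≠ G.edist w a + G.edist a b := by
    intro a b hwa hab h
    have h3 : 1 + 2 ≤ G.edist w b :=
      h ▸ add_le_add (Order.one_le_iff_pos.mpr (edist_pos_of_ne hwa)) hab
    exact absurd (h3.trans (hw b)) (by norm_num)
  rintro (h | h)
  · exact key hwv (by rwa [edist_comm]) h
  · exact key hwu huv h

end GraphMetric

section MeetGraph

abbrev NontrivialElem (L : Type*) [SemilatticeInf L] [BoundedOrder L] : Type _ :=
  {x : L // x ≠ ⊥ ∧ x ≠ ⊤}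

def meetGraph (L : Type*) [SemilatticeInf L] [BoundedOrder L] :
    SimpleGraph (NontrivialElem L) where
  Adj x y := x ≠ y ∧ x.1 ⊓ y.1 ≠ ⊥
  symm := ⟨fun _ _ h => ⟨h.1.symm, by rw [inf_comm]; exact h.2⟩⟩
  loopless := ⟨fun _ h => h.1 rfl⟩

theorem intersectionGraph_eq_meetGraph (R : Type*) [CommRing R] :
    intersectionGraph R = meetGraph (Ideal R) :=
  rfl

variable {L L' : Type*} [SemilatticeInf L] [BoundedOrder L] [SemilatticeInf L'] [BoundedOrder L']

theorem meetGraph_adj {x y : NontrivialElem L} :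
    (meetGraph L).Adj x y ↔ x ≠ y ∧ ¬Disjoint x.1 y.1 := by
  rw [disjoint_iff]
  rfl

theorem meetGraph_edist_le_one {x y : NontrivialElem L} (h : ¬Disjoint x.1 y.1) :
    (meetGraph L).edist x y ≤ 1 := by
  rw [edist_le_one_iff_adj_or_eq, meetGraph_adj]
  tauto

theorem meetGraph_two_le_edist {x y : NontrivialElem L} (h : Disjoint x.1 y.1) :
    2 ≤ (meetGraph L).edist x y := by
  by_contra! hlt
  rcases edist_le_one_iff_adj_or_eq.mp (Order.le_of_lt_add_one hlt) with hadj | rfl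
  · exact (meetGraph_adj.mp hadj).2 h
  · exact x.2.1 (disjoint_self.mp h)

def OrderIso.meetGraphIso (e : L ≃o L') : meetGraph L ≃g meetGraph L' where
  toFun x := ⟨e x.1, by simpa using x.2⟩
  invFun y := ⟨e.symm y.1, by simpa using y.2⟩
  left_inv x := by simp
  right_inv y := by simp
  map_rel_iff' := by
    simp [meetGraph_adj, disjoint_map_orderIso_iff]

end MeetGraph

section Ideals

variable {ι : Type*} [Fintype ι] [DecidableEq ι]

noncomputable def Finset.orderIsoPiOfIsSimpleOrder (α : ι → Type*) [∀ i, PartialOrder (α i)]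
    [∀ i, BoundedOrder (α i)] [∀ i, IsSimpleOrder (α i)] : Finset ι ≃o ∀ i, α i where
  toFun S i := if i ∈ S then ⊤ else ⊥
  invFun f := by classical exact {i | f i = ⊤}
  left_inv S := by ext i; by_cases i ∈ S <;> simp [*]
  right_inv f := by
    funext i
    rcases IsSimpleOrder.eq_bot_or_eq_top (f i) with h | h <;> simp [h]
  map_rel_iff' {S T} := by
    simp only [Equiv.coe_fn_mk, Pi.le_def]
    refine ⟨fun h i hi => ?_, fun h i => ?_⟩
    · simpa [hi, apply_ite (⊤ ≤ ·)] using h i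
    · by_cases hi : i ∈ S
      · simp [hi, h hi]
      · simp [hi]

noncomputable def Ideal.piFieldOrderIso (F : ι → Type*) [∀ i, Field (F i)] :
    Finset ι ≃o Ideal (∀ i, F i) :=
  (Finset.orderIsoPiOfIsSimpleOrder fun i => Ideal (F i)).trans Ideal.piOrderIso.symm

end Ideals

section FinsetMeetGraph

variable {α : Type*} [Fintype α] [DecidableEq α]

theorem card_nontrivialElem_finset [Nonempty α] :
    Nat.card (NontrivialElem (Finset α)) = 2 ^ Fintype.card α - 2 := by
  rw [Nat.card_eq_fintype_card, Fintype.card_subtype]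
  have : ({x | x ≠ ⊥ ∧ x ≠ ⊤} : Finset (Finset α)) = Finset.univ \ {⊥, ⊤} := by
    ext; simp
  rw [this, Finset.card_sdiff_of_subset (Finset.subset_univ _), Finset.card_pair bot_ne_top,
    Finset.card_univ, Fintype.card_finset]

theorem three_le_card_of_ne {x y z : NontrivialElem (Finset α)}
    (hxy : x ≠ y) (hxz : x ≠ z) (hyz : y ≠ z) : 3 ≤ Fintype.card α := by
  obtain ⟨a, -⟩ := Finset.nonempty_iff_ne_empty.mpr x.2.1
  have : Nonempty α := ⟨a⟩
  have h3 : 3 ≤ 2 ^ Fintype.card α - 2 := by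
    rw [← card_nontrivialElem_finset, Nat.card_eq_fintype_card]
    simpa [hxy, hxz, hyz] using Finset.card_le_univ {x, y, z}
  by_contra! h
  interval_cases Fintype.card α <;> simp at h3

theorem meetGraph_finset_edist_le_two (h : 3 ≤ Fintype.card α)
    (x y : NontrivialElem (Finset α)) :
    (meetGraph (Finset α)).edist x y ≤ 2 := by
  obtain ⟨a, ha⟩ := Finset.nonempty_iff_ne_empty.mpr x.2.1
  obtain ⟨b, hb⟩ := Finset.nonempty_iff_ne_empty.mpr y.2.1
  have hab : ({a, b} : Finset α) ≠ ⊤ := fun hab => by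
    have := Finset.card_le_two (a := a) (b := b)
    rw [hab, Finset.top_eq_univ, Finset.card_univ] at this
    omega
  let z : NontrivialElem (Finset α) := ⟨{a, b}, by simp, hab⟩
  calc (meetGraph (Finset α)).edist x y
      ≤ (meetGraph (Finset α)).edist x z + (meetGraph (Finset α)).edist z y :=
        SimpleGraph.edist_triangle
    _ ≤ 1 + 1 := add_le_add
        (meetGraph_edist_le_one (Finset.not_disjoint_iff.mpr ⟨a, ha, by simp [z]⟩))
        (meetGraph_edist_le_one (Finset.not_disjoint_iff.mpr ⟨b, by simp [z], hb⟩))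
    _ = 2 := one_add_one_eq_two

variable {W : Set (NontrivialElem (Finset α))}

theorem IsStrongResolvingSet.mem_or_mem_of_disjoint
    (hW : IsStrongResolvingSet (meetGraph (Finset α)) W) {u v : NontrivialElem (Finset α)}
    (huv : Disjoint u.1 v.1) : u ∈ W ∨ v ∈ W := by
  have hne : u ≠ v := fun h => u.2.1 (disjoint_self.mp (h ▸ huv))
  obtain ⟨w, hw, hres⟩ := hW u v hne
  by_contra! hnot
  have hwu : w ≠ u := ne_of_mem_of_not_mem hw hnot.1
  have hwv : w ≠ v := ne_of_mem_of_not_mem hw hnot.2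
  have hn := three_le_card_of_ne hwu hwv hne
  exact not_stronglyResolves_of_edist_le_two (meetGraph_finset_edist_le_two hn w) hwu hwv
    (meetGraph_two_le_edist huv) hres

theorem IsStrongResolvingSet.intersecting_insert_top_compl [Nonempty α]
    (hW : IsStrongResolvingSet (meetGraph (Finset α)) W) :
    (insert ⊤ (Subtype.val '' Wᶜ)).Intersecting := by
  refine Set.Intersecting.insert ?_ top_ne_bot ?_
  · rintro _ ⟨u, hu, rfl⟩ _ ⟨v, hv, rfl⟩ huv
    exact (hW.mem_or_mem_of_disjoint huv).elim hu hv
  · rintro _ ⟨u, -, rfl⟩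
    rw [top_disjoint]
    exact u.2.1

theorem IsStrongResolvingSet.le_ncard [Nonempty α]
    (hW : IsStrongResolvingSet (meetGraph (Finset α)) W) :
    2 ^ (Fintype.card α - 1) - 1 ≤ W.ncard := by
  set S := insert ⊤ (Subtype.val '' Wᶜ)
  have hS : 2 * S.ncard ≤ 2 ^ Fintype.card α := by
    rw [Set.ncard_eq_toFinset_card S (Set.toFinite S), ← Fintype.card_finset]
    exact Set.Intersecting.card_le (by simpa using hW.intersecting_insert_top_compl)
  have hSW : S.ncard = Wᶜ.ncard + 1 := by
    rw [Set.ncard_insert_of_notMem, Set.ncard_image_of_injective _ Subtype.val_injective]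
    rintro ⟨u, -, hu⟩
    exact u.2.2 hu
  have hWW : W.ncard + Wᶜ.ncard = 2 ^ Fintype.card α - 2 := by
    rw [Set.ncard_add_ncard_compl, card_nontrivialElem_finset]
  have hpow : 2 ^ Fintype.card α = 2 * 2 ^ (Fintype.card α - 1) := by
    rw [← pow_succ', Nat.sub_add_cancel Fintype.card_pos]
  omega

theorem exists_stronglyResolves_of_not_subset {a : α} {u v : NontrivialElem (Finset α)}
    (hu : a ∈ u.1) (hv : a ∈ v.1) (hvu : ¬v.1 ⊆ u.1) :
    ∃ w ∈ {x : NontrivialElem (Finset α) | a ∉ x.1},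
      StronglyResolves (meetGraph (Finset α)) w u v := by
  obtain ⟨b, hb⟩ := Finset.sdiff_nonempty.mpr hvu
  let w : NontrivialElem (Finset α) := ⟨v.1 \ u.1, Finset.ne_empty_of_mem hb,
    fun h => (Finset.mem_sdiff.mp (Finset.eq_univ_iff_forall.mp h a)).2 hu⟩
  refine ⟨w, by simp [w, hu], .inl (le_antisymm SimpleGraph.edist_triangle ?_)⟩
  calc (meetGraph (Finset α)).edist w v + (meetGraph (Finset α)).edist v u
      ≤ 1 + 1 := add_le_add
        (meetGraph_edist_le_one (Finset.not_disjoint_iff.mpr ⟨b, hb, Finset.sdiff_subset hb⟩))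
        (meetGraph_edist_le_one (Finset.not_disjoint_iff.mpr ⟨a, hv, hu⟩))
    _ = 2 := one_add_one_eq_two
    _ ≤ (meetGraph (Finset α)).edist w u := meetGraph_two_le_edist Finset.sdiff_disjoint

theorem isStrongResolvingSet_setOf_not_mem (a : α) :
    IsStrongResolvingSet (meetGraph (Finset α)) {x | a ∉ x.1} := by
  intro u v huv
  by_cases hu : a ∉ u.1
  · exact ⟨u, hu, stronglyResolves_self_left u v⟩
  by_cases hv : a ∉ v.1
  · exact ⟨v, hv, (stronglyResolves_self_left v u).symm⟩
  rw [not_not] at hu hv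
  by_cases hvu : v.1 ⊆ u.1
  · have huv' : ¬u.1 ⊆ v.1 := fun h => huv (Subtype.ext (h.antisymm hvu))
    obtain ⟨w, hw, hres⟩ := exists_stronglyResolves_of_not_subset hv hu huv'
    exact ⟨w, hw, hres.symm⟩
  · exact exists_stronglyResolves_of_not_subset hu hv hvu

theorem ncard_setOf_not_mem (a : α) :
    {x : NontrivialElem (Finset α) | a ∉ x.1}.ncard = 2 ^ (Fintype.card α - 1) - 1 := by
  rw [← Set.ncard_image_of_injective _ Subtype.val_injective]
  have : Subtype.val '' {x : NontrivialElem (Finset α) | a ∉ x.1} =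
      ↑((Finset.univ.erase a).powerset.erase ∅) := by
    ext S
    simp only [Set.mem_image, Set.mem_ofPred_eq, Subtype.exists, exists_and_right,
      exists_eq_right, Finset.coe_erase, Set.mem_sdiff, Finset.mem_coe, Finset.mem_powerset,
      Set.mem_singleton_iff, Finset.subset_erase, Finset.subset_univ, true_and]
    refine ⟨fun ⟨⟨hS, _⟩, ha⟩ => ⟨ha, hS⟩, fun ⟨ha, hS⟩ => ⟨⟨hS, fun h => ?_⟩, ha⟩⟩
    exact ha (h ▸ Finset.mem_univ a)
  rw [this, Set.ncard_coe_finset, Finset.card_erase_of_mem (Finset.empty_mem_powerset _),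
    Finset.card_powerset, Finset.card_erase_of_mem (Finset.mem_univ a), Finset.card_univ]

theorem isLeast_ncard_strongResolvingSet_meetGraph_finset [Nonempty α] :
    IsLeast {k | ∃ W, W.Finite ∧ IsStrongResolvingSet (meetGraph (Finset α)) W ∧ W.ncard = k}
      (2 ^ (Fintype.card α - 1) - 1) := by
  inhabit α
  refine ⟨⟨_, Set.toFinite _, isStrongResolvingSet_setOf_not_mem default,
    ncard_setOf_not_mem default⟩, ?_⟩
  rintro _ ⟨W, -, hW, rfl⟩
  exact hW.le_ncard

end FinsetMeetGraph

theorem statement5 (n : ℕ) (hn : 2 ≤ n) (F : Fin n → Type*) [∀ i, Field (F i)] :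
    IsLeast {k : ℕ | ∃ W : Set (NontrivialIdeal (∀ i, F i)), W.Finite ∧
        IsStrongResolvingSet (intersectionGraph (∀ i, F i)) W ∧ W.ncard = k}
      (2 ^ n - 2 ^ (n - 1) - 1) := by
  have : Nonempty (Fin n) := ⟨⟨0, by omega⟩⟩
  rw [intersectionGraph_eq_meetGraph,
    (Ideal.piFieldOrderIso F).symm.meetGraphIso.strongResolvingSet_ncards_eq]
  convert isLeast_ncard_strongResolvingSet_meetGraph_finset (α := Fin n) using 1
  rw [Fintype.card_fin]
  have hpow : 2 ^ n = 2 * 2 ^ (n - 1) := by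
    rw [← pow_succ', Nat.sub_add_cancel (by omega)]
  omega
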